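/- arXiv:1411.4324 — 4 statements merged into one kernel-verified Lean document; each statement's English description precedes it below -/
import Mathlib

section
/- For any matrices X and Y in R^{s×t}, the inner product ⟨X, Y⟩ = trace(XᵀY) satisfies ⟨X, Y⟩ ≤ Σ_{i=1}^{min(s,t)} σ_i(X) σ_i(Y), where σ_i denotes the i-th largest singular value. -/
open Matrix

/-- The singular values of a real `s × t` matrix, indexed by `Fin t`
(square roots of the eigenvalues of `Xᴴ * X`). -/
noncomputable def svals {s t : ℕ} (X : Matrix (Fin s) (Fin t) ℝ) : Fin t → ℝ :=
  fun k => Real.sqrt ((Matrix.isHermitian_conjTranspose_mul_self X).eigenvalues k)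

/-- The singular values sorted in decreasing order: `sdesc X i` is the
`(i+1)`-th largest singular value of `X`. -/
noncomputable def sdesc {s t : ℕ} (X : Matrix (Fin s) (Fin t) ℝ) : Fin t → ℝ :=
  fun i => svals X (Tuple.sort (svals X) i.rev)

/-!
Write `X = K Σ Vᵀ` and `Y = L T Wᵀ`, where `Σ` and `T` are the diagonal matrices of singular
values, `V` and `W` are orthogonal and `K` and `L` are partial isometries (a thin singular value
decomposition, read off from the spectral decomposition of `XᵀX`). Then
`⟨X, Y⟩ = ∑ₖₗ σₖ τₗ Pₖₗ Qₖₗ` with `P = KᵀL` and `Q = VᵀW`, and `Pₖₗ Qₖₗ ≤ (Pₖₗ² + Qₖₗ²) / 2`.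
Since `K`, `L`, `V`, `W` are partial isometries, the rows and columns of `P` and `Q` have norm
at most one, so `P ⊙ P` and `Q ⊙ Q` are doubly substochastic. For such a matrix `D` and
decreasing nonnegative vectors `a` and `b`, `a ⬝ D b ≤ a ⬝ b`: both sides are bilinear, and
`a`, `b` are nonnegative combinations of indicators of initial segments `[0, k]`, for which
the inequality is a bound on a row or a column sum of `D`. Applied to the sorted singular values
this gives `⟨X, Y⟩ ≤ ∑ₖ σ↓ₖ τ↓ₖ`, and the terms with `k ≥ s` vanish because `XᵀX` has rank
at most `s`.
-/

open Finset

namespace Matrix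

variable {m n p : Type*} [Fintype m] [Fintype n] [Fintype p]

structure IsDoublySubstochastic (D : Matrix n n ℝ) : Prop where
  nonneg : ∀ i j, 0 ≤ D i j
  row_sum_le_one : ∀ i, ∑ j, D i j ≤ 1
  col_sum_le_one : ∀ j, ∑ i, D i j ≤ 1

namespace IsDoublySubstochastic

variable {D : Matrix n n ℝ}

theorem mulVec_le_one (hD : D.IsDoublySubstochastic) {v : n → ℝ} (hv : v ≤ 1) :
    D *ᵥ v ≤ 1 := fun i =>
  calc (D *ᵥ v) i = ∑ j, D i j * v j := rfl
    _ ≤ ∑ j, D i j := sum_le_sum fun j _ => mul_le_of_le_one_right (hD.nonneg i j) (hv j)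
    _ ≤ 1 := hD.row_sum_le_one i

theorem transpose (hD : D.IsDoublySubstochastic) : Dᵀ.IsDoublySubstochastic :=
  ⟨fun i j => hD.nonneg j i, hD.col_sum_le_one, hD.row_sum_le_one⟩

theorem submatrix (hD : D.IsDoublySubstochastic) (e₁ e₂ : Equiv.Perm n) :
    (D.submatrix e₁ e₂).IsDoublySubstochastic :=
  ⟨fun _ _ => hD.nonneg _ _,
    fun i => (Equiv.sum_comp e₂ (D (e₁ i))).trans_le (hD.row_sum_le_one _),
    fun j => (Equiv.sum_comp e₁ (fun i => D i (e₂ j))).trans_le (hD.col_sum_le_one _)⟩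

end IsDoublySubstochastic

def IsPartialIsometry (K : Matrix m n ℝ) : Prop :=
  K * Kᵀ * K = K

namespace IsPartialIsometry

variable {K : Matrix m n ℝ}

theorem isIdempotentElem_transpose_mul_self (hK : K.IsPartialIsometry) :
    IsIdempotentElem (Kᵀ * K) := by
  rw [IsIdempotentElem, Matrix.mul_assoc, ← Matrix.mul_assoc K]
  exact congrArg (Kᵀ * ·) hK

theorem isIdempotentElem_mul_transpose_self (hK : K.IsPartialIsometry) :
    IsIdempotentElem (K * Kᵀ) := by
  rw [IsIdempotentElem, ← Matrix.mul_assoc]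
  exact congrArg (· * Kᵀ) hK

end IsPartialIsometry

theorem isPartialIsometry_of_mul_transpose_self_eq_one [DecidableEq m] {V : Matrix m n ℝ}
    (hV : V * Vᵀ = 1) : V.IsPartialIsometry := by
  rw [IsPartialIsometry, hV, Matrix.one_mul]

theorem diag_le_one_of_isIdempotentElem {N : Matrix n n ℝ} (hNT : Nᵀ = N)
    (hN : IsIdempotentElem N) (i : n) : N i i ≤ 1 := by
  have hgram : Nᵀ * N = N := by rw [hNT, hN.eq]
  have hsq : N i i = ∑ j, N j i ^ 2 := by
    conv_lhs => rw [← hgram]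
    simp only [mul_apply, transpose_apply, sq]
  have : N i i ^ 2 ≤ N i i :=
    hsq ▸ single_le_sum (fun j _ => sq_nonneg (N j i)) (mem_univ i)
  nlinarith

theorem diag_transpose_mul_mul_le {E : Matrix m m ℝ} (hET : Eᵀ = E) (hE : IsIdempotentElem E)
    (K : Matrix m n ℝ) (i : n) : (Kᵀ * E * K) i i ≤ (Kᵀ * K) i i := by
  have hgram : Kᵀ * K - Kᵀ * E * K = (K - E * K)ᵀ * (K - E * K) := by
    rw [transpose_sub, transpose_mul, hET, Matrix.sub_mul, Matrix.mul_sub, Matrix.mul_sub]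
    simp only [Matrix.mul_assoc]
    rw [← Matrix.mul_assoc E E K, hE.eq]
    abel
  have := (posSemidef_conjTranspose_mul_self (K - E * K)).diag_nonneg (i := i)
  rw [conjTranspose_eq_transpose_of_trivial, ← hgram, sub_apply] at this
  linarith

theorem IsPartialIsometry.sum_sq_transpose_mul_apply_le_one {K : Matrix m n ℝ}
    {L : Matrix m p ℝ} (hK : K.IsPartialIsometry) (hL : L.IsPartialIsometry) (i : n) :
    ∑ j, (Kᵀ * L) i j ^ 2 ≤ 1 :=
  calc ∑ j, (Kᵀ * L) i j ^ 2 = (Kᵀ * (L * Lᵀ) * K) i i := by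
        rw [show Kᵀ * (L * Lᵀ) * K = (Kᵀ * L) * (Kᵀ * L)ᵀ by
          simp only [transpose_mul, transpose_transpose, Matrix.mul_assoc]]
        simp only [mul_apply, transpose_apply, sq]
    _ ≤ (Kᵀ * K) i i := diag_transpose_mul_mul_le (by rw [transpose_mul, transpose_transpose])
        hL.isIdempotentElem_mul_transpose_self K i
    _ ≤ 1 := diag_le_one_of_isIdempotentElem (by rw [transpose_mul, transpose_transpose])
        hK.isIdempotentElem_transpose_mul_self i

theorem IsPartialIsometry.isDoublySubstochastic_hadamard {K L : Matrix m n ℝ}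
    (hK : K.IsPartialIsometry) (hL : L.IsPartialIsometry) :
    ((Kᵀ * L) ⊙ (Kᵀ * L)).IsDoublySubstochastic where
  nonneg _ _ := mul_self_nonneg _
  row_sum_le_one i := by
    simpa only [hadamard_apply, sq] using hK.sum_sq_transpose_mul_apply_le_one hL i
  col_sum_le_one j := by
    simpa only [hadamard_apply, sq, ← transpose_apply (Kᵀ * L), transpose_mul,
      transpose_transpose] using hL.sum_sq_transpose_mul_apply_le_one hK j

theorem dotProduct_hadamard_mulVec_le {σ τ : n → ℝ} (hσ : 0 ≤ σ) (hτ : 0 ≤ τ)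
    (P Q : Matrix n n ℝ) :
    σ ⬝ᵥ (P ⊙ Q) *ᵥ τ ≤ (σ ⬝ᵥ (P ⊙ P) *ᵥ τ + σ ⬝ᵥ (Q ⊙ Q) *ᵥ τ) / 2 := by
  rw [← dotProduct_add, ← add_mulVec, div_eq_inv_mul, ← smul_eq_mul, ← dotProduct_smul,
    ← smul_mulVec]
  simp only [dotProduct, mulVec]
  gcongr with k _ l _
  · exact hσ k
  · exact hτ l
  · simp only [hadamard_apply, Matrix.add_apply, Matrix.smul_apply, smul_eq_mul]
    nlinarith [sq_nonneg (P k l - Q k l)]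

theorem sum_mul_eq_dotProduct_hadamard_mulVec [DecidableEq n] {X Y : Matrix m p ℝ}
    {K L : Matrix m n ℝ} {V W : Matrix p n ℝ} {σ τ : n → ℝ} (hX : X = K * diagonal σ * Vᵀ)
    (hY : Y = L * diagonal τ * Wᵀ) :
    ∑ i, ∑ j, X i j * Y i j = σ ⬝ᵥ ((Kᵀ * L) ⊙ (Vᵀ * W)) *ᵥ τ := by
  subst hX hY
  calc _ = trace ((K * diagonal σ * Vᵀ)ᵀ * (L * diagonal τ * Wᵀ)) := by
        simp only [trace, diag_apply, mul_apply, transpose_apply]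
        exact sum_comm
    _ = trace (diagonal σ * (Kᵀ * L) * diagonal τ * (Vᵀ * W)ᵀ) := by
        simp only [transpose_mul, transpose_transpose, diagonal_transpose, Matrix.mul_assoc]
        rw [trace_mul_comm]
        simp only [Matrix.mul_assoc]
    _ = _ := by
        refine sum_congr rfl fun k _ => ?_
        rw [diag_apply, mul_apply, mulVec, dotProduct, mul_sum]
        refine sum_congr rfl fun l _ => ?_
        rw [mul_diagonal, diagonal_mul, transpose_apply, hadamard_apply]
        ring

theorem exists_isPartialIsometry_mul_diagonal_eq [DecidableEq n] {A : Matrix m n ℝ}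
    {d : n → ℝ} (h : Aᵀ * A = diagonal (d ^ 2)) :
    ∃ K : Matrix m n ℝ, K.IsPartialIsometry ∧ K * diagonal d = A := by
  have hcol : ∀ i k, d k = 0 → A i k = 0 := by
    intro i k hk
    have hsum : ∑ j, A j k ^ 2 = 0 := by
      simpa [mul_apply, sq, hk] using congrFun (congrFun h k) k
    exact pow_eq_zero_iff two_ne_zero |>.1 <|
      (sum_eq_zero_iff_of_nonneg fun j _ => sq_nonneg (A j k)).1 hsum i (mem_univ i)
  -- `d⁻¹` is `0` where `d` vanishes, and so are the corresponding columns of `A`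
  refine ⟨A * diagonal d⁻¹, ?_, ?_⟩
  · have hgram :
        (A * diagonal d⁻¹)ᵀ * (A * diagonal d⁻¹) = diagonal (d⁻¹ * (d ^ 2 * d⁻¹)) := by
      rw [transpose_mul, diagonal_transpose, Matrix.mul_assoc, ← Matrix.mul_assoc Aᵀ, h,
        diagonal_mul_diagonal, diagonal_mul_diagonal]
      rfl
    rw [IsPartialIsometry, Matrix.mul_assoc, hgram, Matrix.mul_assoc, diagonal_mul_diagonal]
    congr 2
    funext k
    by_cases hk : d k = 0
    · simp [hk]
    · simp only [Pi.mul_apply, Pi.inv_apply, Pi.pow_apply]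
      field_simp
  · ext i k
    rw [Matrix.mul_assoc, diagonal_mul_diagonal, mul_diagonal]
    by_cases hk : d k = 0
    · simp [hk, hcol i k hk]
    · simp [hk]

end Matrix

theorem Antitone.exists_nonneg_eq_sum_smul_indicator_Iic {n : ℕ} {a : Fin n → ℝ}
    (ha : Antitone a) (ha0 : 0 ≤ a) :
    ∃ α : Fin n → ℝ, 0 ≤ α ∧ a = ∑ k, α k • (Set.Iic k).indicator 1 := by
  set b : ℕ → ℝ := fun j => if h : j < n then a ⟨j, h⟩ else 0 with hb
  have hb_le : ∀ k : Fin n, b (k + 1) ≤ b k := by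
    intro k
    simp only [hb, dif_pos k.2]
    split_ifs with h
    · exact ha (Fin.mk_le_mk.2 k.val.le_succ)
    · exact ha0 k
  refine ⟨fun k => b k - b (k + 1), fun k => sub_nonneg.2 (hb_le k), funext fun j => ?_⟩
  have hbj : b j = a j := dif_pos j.2
  have hbn : b n = 0 := dif_neg (lt_irrefl n)
  have hIco : (range n).filter (fun k => (j : ℕ) ≤ k) = Ico (j : ℕ) n := by
    ext k; simp only [mem_filter, mem_range, mem_Ico]; omega
  simp only [Finset.sum_apply, Pi.smul_apply, smul_eq_mul, Set.indicator_apply, Set.mem_Iic,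
    Pi.one_apply, mul_ite, mul_one, mul_zero, Fin.le_def]
  rw [Fin.sum_univ_eq_sum_range (fun k => if (j : ℕ) ≤ k then b k - b (k + 1) else 0) n,
    ← sum_filter, hIco, ← neg_inj, ← sum_neg_distrib]
  simp only [neg_sub]
  rw [sum_Ico_sub b j.2.le, hbn, hbj, zero_sub]

theorem Fin.apply_eq_zero_of_card_ne_zero_le {n s : ℕ} {f : Fin n → ℝ} (hf0 : 0 ≤ f)
    {π : Equiv.Perm (Fin n)} (hπ : Antitone (f ∘ π)) (hcard : #{k | f k ≠ 0} ≤ s) {k : Fin n}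
    (hk : s ≤ k) : f (π k) = 0 := by
  by_contra hne
  have hmaps : ∀ j ∈ Iic k, π j ∈ ({k | f k ≠ 0} : Finset (Fin n)) := fun j hj =>
    mem_filter.2 ⟨mem_univ _, ((lt_of_le_of_ne (hf0 _) (Ne.symm hne)).trans_le
      (hπ (mem_Iic.1 hj))).ne'⟩
  have := (card_le_card_of_injOn π hmaps π.injective.injOn).trans hcard
  rw [Fin.card_Iic] at this
  omega

namespace Matrix.IsDoublySubstochastic

variable {n : ℕ} {D : Matrix (Fin n) (Fin n) ℝ}

theorem indicator_Iic_dotProduct_mulVec_le (hD : D.IsDoublySubstochastic) (k l : Fin n) :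
    (Set.Iic k).indicator 1 ⬝ᵥ D *ᵥ (Set.Iic l).indicator 1 ≤
      (Set.Iic k).indicator 1 ⬝ᵥ (Set.Iic l).indicator (1 : Fin n → ℝ) := by
  have hu0 : ∀ k : Fin n, 0 ≤ (Set.Iic k).indicator (1 : Fin n → ℝ) :=
    fun k => Set.indicator_nonneg fun _ _ => zero_le_one
  have hu1 : ∀ k : Fin n, (Set.Iic k).indicator (1 : Fin n → ℝ) ≤ 1 :=
    fun k => Set.indicator_le_self' fun _ _ => zero_le_one
  have hu : ∀ {k l : Fin n}, k ≤ l → (Set.Iic k).indicator 1 ⬝ᵥ (Set.Iic l).indicator 1 =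
      (Set.Iic k).indicator 1 ⬝ᵥ (1 : Fin n → ℝ) := by
    intro k l hkl
    refine sum_congr rfl fun j _ => ?_
    by_cases hj : j ≤ k
    · simp [hj, hj.trans hkl]
    · simp [hj]
  rcases le_total k l with hkl | hlk
  · rw [hu hkl]
    exact dotProduct_le_dotProduct_of_nonneg_left (hD.mulVec_le_one (hu1 l)) (hu0 k)
  · rw [dotProduct_mulVec, dotProduct_comm, ← mulVec_transpose,
      dotProduct_comm ((Set.Iic k).indicator 1), hu hlk]
    exact dotProduct_le_dotProduct_of_nonneg_left (hD.transpose.mulVec_le_one (hu1 k)) (hu0 l)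

theorem dotProduct_mulVec_le (hD : D.IsDoublySubstochastic) {a b : Fin n → ℝ}
    (ha : Antitone a) (hb : Antitone b) (ha0 : 0 ≤ a) (hb0 : 0 ≤ b) :
    a ⬝ᵥ D *ᵥ b ≤ a ⬝ᵥ b := by
  obtain ⟨α, hα, rfl⟩ := ha.exists_nonneg_eq_sum_smul_indicator_Iic ha0
  obtain ⟨β, hβ, rfl⟩ := hb.exists_nonneg_eq_sum_smul_indicator_Iic hb0
  simp only [mulVec_sum, mulVec_smul, sum_dotProduct, dotProduct_sum, smul_dotProduct,
    dotProduct_smul, smul_eq_mul]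
  gcongr
  · exact hβ _
  · exact hα _
  · exact hD.indicator_Iic_dotProduct_mulVec_le _ _

theorem dotProduct_mulVec_le_comp_perm (hD : D.IsDoublySubstochastic) {a b : Fin n → ℝ}
    (ha0 : 0 ≤ a) (hb0 : 0 ≤ b) {π ρ : Equiv.Perm (Fin n)} (ha : Antitone (a ∘ π))
    (hb : Antitone (b ∘ ρ)) :
    a ⬝ᵥ D *ᵥ b ≤ (a ∘ π) ⬝ᵥ (b ∘ ρ) := by
  have := (hD.submatrix π ρ).dotProduct_mulVec_le ha hb (fun k => ha0 (π k)) (fun k => hb0 (ρ k))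
  rwa [submatrix_mulVec_equiv, Function.comp_assoc, Equiv.self_comp_symm, Function.comp_id,
    comp_equiv_dotProduct_comp_equiv] at this

end Matrix.IsDoublySubstochastic

section SingularValues

variable {s t : ℕ} (X Y : Matrix (Fin s) (Fin t) ℝ)

theorem svals_nonneg : 0 ≤ svals X := fun _ => Real.sqrt_nonneg _

theorem sdesc_eq_comp : sdesc X = svals X ∘ (Fin.revPerm.trans (Tuple.sort (svals X))) := rfl

theorem antitone_sdesc : Antitone (sdesc X) :=
  fun _ _ hij => Tuple.monotone_sort (svals X) (Fin.rev_le_rev.2 hij)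

theorem exists_eq_mul_diagonal_svals_mul_transpose :
    ∃ (K : Matrix (Fin s) (Fin t) ℝ) (V : Matrix (Fin t) (Fin t) ℝ),
      K.IsPartialIsometry ∧ V * Vᵀ = 1 ∧ X = K * diagonal (svals X) * Vᵀ := by
  have hH := isHermitian_conjTranspose_mul_self X
  have hU := hH.eigenvectorUnitary.2
  set V : Matrix (Fin t) (Fin t) ℝ := ↑hH.eigenvectorUnitary
  have hV : V * Vᵀ = 1 := by
    rwa [mem_unitaryGroup_iff, star_eq_conjTranspose, conjTranspose_eq_transpose_of_trivial] at hU
  have hsq : svals X ^ 2 = hH.eigenvalues := funext fun k =>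
    Real.sq_sqrt ((posSemidef_conjTranspose_mul_self X).eigenvalues_nonneg k)
  have hdiag : (X * V)ᵀ * (X * V) = diagonal (svals X ^ 2) := by
    have := hH.conjStarAlgAut_star_eigenvectorUnitary
    rw [Unitary.conjStarAlgAut_star_apply, RCLike.ofReal_real_eq_id, Function.id_comp] at this
    rw [hsq, ← this, transpose_mul, ← conjTranspose_eq_transpose_of_trivial X,
      ← conjTranspose_eq_transpose_of_trivial V, ← star_eq_conjTranspose]
    simp only [Matrix.mul_assoc]
    rfl
  obtain ⟨K, hK, hKX⟩ := exists_isPartialIsometry_mul_diagonal_eq hdiag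
  exact ⟨K, V, hK, hV, by rw [hKX, Matrix.mul_assoc, hV, Matrix.mul_one]⟩

theorem card_svals_ne_zero_le : #{k | svals X k ≠ 0} ≤ s := by
  have hH := isHermitian_conjTranspose_mul_self X
  calc #{k | svals X k ≠ 0} = #{k | hH.eigenvalues k ≠ 0} := by
        refine congrArg card (filter_congr fun k _ => ?_)
        exact not_congr <| Real.sqrt_eq_zero
          ((posSemidef_conjTranspose_mul_self X).eigenvalues_nonneg k)
    _ = (Xᴴ * X).rank := by rw [hH.rank_eq_card_non_zero_eigs, Fintype.card_subtype]
    _ = X.rank := rank_conjTranspose_mul_self X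
    _ ≤ s := rank_le_height X

theorem sdesc_eq_zero {k : Fin t} (hk : s ≤ k) : sdesc X k = 0 :=
  Fin.apply_eq_zero_of_card_ne_zero_le (π := Fin.revPerm.trans (Tuple.sort (svals X)))
    (svals_nonneg X) (antitone_sdesc X) (card_svals_ne_zero_le X) hk

theorem dotProduct_sdesc_eq_sum_castLE :
    sdesc X ⬝ᵥ sdesc Y =
      ∑ i : Fin (min s t), sdesc X (Fin.castLE (min_le_right s t) i) *
        sdesc Y (Fin.castLE (min_le_right s t) i) := by
  symm
  refine Fintype.sum_of_injective (Fin.castLE (min_le_right s t)) (Fin.castLE_injective _) _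
    (fun k => sdesc X k * sdesc Y k) (fun k hk => ?_) fun _ => rfl
  have hk : s ≤ k := by
    by_contra! h
    exact hk ⟨⟨k, lt_min h k.2⟩, rfl⟩
  rw [sdesc_eq_zero X hk, zero_mul]

theorem dotProduct_svals_mulVec_le {D : Matrix (Fin t) (Fin t) ℝ}
    (hD : D.IsDoublySubstochastic) : svals X ⬝ᵥ D *ᵥ svals Y ≤ sdesc X ⬝ᵥ sdesc Y := by
  rw [sdesc_eq_comp X, sdesc_eq_comp Y]
  exact hD.dotProduct_mulVec_le_comp_perm (svals_nonneg X) (svals_nonneg Y)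
    (antitone_sdesc X) (antitone_sdesc Y)

end SingularValues

/-- von Neumann's trace inequality: `⟨X, Y⟩ = trace(Xᵀ Y) ≤ ∑_{i=1}^{min(s,t)} σ_i(X) σ_i(Y)`. -/
theorem von_neumann_trace_inequality {s t : ℕ} (X Y : Matrix (Fin s) (Fin t) ℝ) :
    ∑ i, ∑ j, X i j * Y i j ≤
      ∑ i : Fin (min s t),
        sdesc X (Fin.castLE (min_le_right s t) i) *
          sdesc Y (Fin.castLE (min_le_right s t) i) := by
  obtain ⟨K, V, hK, hV, hX⟩ := exists_eq_mul_diagonal_svals_mul_transpose X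
  obtain ⟨L, W, hL, hW, hY⟩ := exists_eq_mul_diagonal_svals_mul_transpose Y
  have hP := hK.isDoublySubstochastic_hadamard hL
  have hQ := (isPartialIsometry_of_mul_transpose_self_eq_one hV).isDoublySubstochastic_hadamard
    (isPartialIsometry_of_mul_transpose_self_eq_one hW)
  calc ∑ i, ∑ j, X i j * Y i j = svals X ⬝ᵥ ((Kᵀ * L) ⊙ (Vᵀ * W)) *ᵥ svals Y :=
        sum_mul_eq_dotProduct_hadamard_mulVec hX hY
    _ ≤ (svals X ⬝ᵥ ((Kᵀ * L) ⊙ (Kᵀ * L)) *ᵥ svals Y +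
          svals X ⬝ᵥ ((Vᵀ * W) ⊙ (Vᵀ * W)) *ᵥ svals Y) / 2 :=
        dotProduct_hadamard_mulVec_le (svals_nonneg X) (svals_nonneg Y) _ _
    _ ≤ (sdesc X ⬝ᵥ sdesc Y + sdesc X ⬝ᵥ sdesc Y) / 2 := by
        gcongr
        · exact dotProduct_svals_mulVec_le X Y hP
        · exact dotProduct_svals_mulVec_le X Y hQ
    _ = sdesc X ⬝ᵥ sdesc Y := add_self_div_two _
    _ = _ := dotProduct_sdesc_eq_sum_castLE X Y
end

section
/- For matrices A, Â ∈ R^{m×r} each with orthonormal columns, if ‖AᵀÂ‖_F = √r, then the r×r matrix AᵀÂ is orthogonal and Â = A(AᵀÂ), i.e., Â lies in the column space of A. -/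
open Matrix

/-- Squared Frobenius norm of a matrix. -/
def frobSq {a b : ℕ} (M : Matrix (Fin a) (Fin b) ℝ) : ℝ := ∑ i, ∑ j, (M i j) ^ 2

lemma frobSq_nonneg {a b : ℕ} (M : Matrix (Fin a) (Fin b) ℝ) : 0 ≤ frobSq M :=
  Finset.sum_nonneg fun _ _ => Finset.sum_nonneg fun _ _ => sq_nonneg _

lemma frobSq_eq_trace {a b : ℕ} (M : Matrix (Fin a) (Fin b) ℝ) :
    frobSq M = Matrix.trace (Mᵀ * M) := by
  unfold frobSq Matrix.trace
  simp only [Matrix.diag, Matrix.mul_apply, Matrix.transpose_apply, sq]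
  rw [Finset.sum_comm]

/-- If `A, Â ∈ ℝ^{m × r}` have orthonormal columns and `‖Aᵀ Â‖_F = √r`, then
`Aᵀ Â` is orthogonal and `Â = A (Aᵀ Â)`. -/
theorem stmt_3 {m r : ℕ} (A Ah : Matrix (Fin m) (Fin r) ℝ)
    (hA : Aᵀ * A = 1) (hAh : Ahᵀ * Ah = 1)
    (hnorm : Real.sqrt (frobSq (Aᵀ * Ah)) = Real.sqrt r) :
    (Aᵀ * Ah)ᵀ * (Aᵀ * Ah) = 1 ∧ Ah = A * (Aᵀ * Ah) := by
  set M := Aᵀ * Ah with hM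
  have hMt : Mᵀ = Ahᵀ * A := by
    rw [hM, Matrix.transpose_mul, Matrix.transpose_transpose]
  have hfr : frobSq M = (r : ℝ) := by
    have h1 := congrArg (· ^ 2) hnorm
    simpa [Real.sq_sqrt (frobSq_nonneg M),
      Real.sq_sqrt (by positivity : (0:ℝ) ≤ (r:ℝ))] using h1
  have htr : Matrix.trace (Mᵀ * M) = (r : ℝ) := by
    rw [← frobSq_eq_trace, hfr]
  have key : (Ah - A * M)ᵀ * (Ah - A * M) = 1 - Mᵀ * M := by
    rw [Matrix.transpose_sub, Matrix.transpose_mul, Matrix.sub_mul,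
      Matrix.mul_sub, Matrix.mul_sub, hAh,
      ← Matrix.mul_assoc Ahᵀ A M, ← hMt,
      Matrix.mul_assoc Mᵀ Aᵀ Ah, ← hM,
      Matrix.mul_assoc Mᵀ Aᵀ (A * M), ← Matrix.mul_assoc Aᵀ A M, hA,
      Matrix.one_mul]
    abel
  have hzero : frobSq (Ah - A * M) = 0 := by
    rw [frobSq_eq_trace, key, Matrix.trace_sub, htr, Matrix.trace_one]
    simp
  have hent : ∀ i j, (Ah - A * M) i j = 0 := by
    intro i j
    have h1 := (Finset.sum_eq_zero_iff_of_nonneg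
      (fun i _ => Finset.sum_nonneg fun j _ => sq_nonneg ((Ah - A * M) i j))).mp hzero
    have h2 := (Finset.sum_eq_zero_iff_of_nonneg
      (fun j _ => sq_nonneg ((Ah - A * M) i j))).mp (h1 i (Finset.mem_univ i))
    have := h2 j (Finset.mem_univ j)
    exact pow_eq_zero_iff (by norm_num) |>.mp this
  have hAhM : Ah = A * M := by
    ext i j
    have := hent i j
    simpa [sub_eq_zero] using this
  refine ⟨?_, hAhM⟩
  calc Mᵀ * M = Mᵀ * (Aᵀ * A) * M := by rw [hA, Matrix.mul_one]
    _ = (A * M)ᵀ * (A * M) := by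
        simp [Matrix.transpose_mul, Matrix.mul_assoc]
    _ = 1 := by rw [← hAhM, hAh]
end

section
/- Let X ∈ R^{s×r} satisfy XᵀX = I and let Y ∈ R^{s×t} with full SVD Y = UΣVᵀ + U_⊥Σ_⊥V_⊥ᵀ, where U ∈ R^{s×r} corresponds to the r leading singular values. Set α = (1 − σ_{r+1}²(Y)/σ_r²(Y)) / (1 + σ_{r+1}²(Y)/σ_r²(Y)) (with convention 0/0 = 0). Then there exists an orthogonal matrix D̃ ∈ R^{r×r}, maximizing ⟨Dᵀ, XᵀUΣ²⟩ over orthogonal D, such that ‖UᵀY‖_F² − ‖XᵀY‖_F² ≥ α ‖D̃ᵀUᵀY − XᵀY‖_F². -/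
/-!
With `A = Xᵀ U` and `C = Xᵀ U⊥` we have `A Aᵀ + C Cᵀ = 1`, and in the orthonormal frame `V, V⊥`
the three norms split as `‖Uᵀ Y‖² = ‖Σ‖²`, `‖Xᵀ Y‖² = ‖A Σ‖² + ‖C Σ⊥‖²` and
`‖D̃ᵀ Uᵀ Y - Xᵀ Y‖² = ‖Σ‖² + ‖A Σ‖² - 2 ⟨D̃ᵀ Σ, A Σ⟩ + ‖C Σ⊥‖²`.

A maximiser `D̃` of `D ↦ tr (D A Σ²)` over the compact orthogonal group makes `A Σ² D̃` symmetric
positive semidefinite (test it against Householder reflections and plane rotations), so `D̃`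
maximises the same trace over all contractions. Since `Aᵀ` is a contraction, this gives
`⟨D̃ᵀ Σ, A Σ⟩ ≥ ‖A Σ‖²`. Moreover `‖C Σ⊥‖² ≤ σ_{r+1}² ‖C‖²`, while the columns of `A` have norm at
most one, so `‖Σ‖² - ‖A Σ‖² ≥ σ_r² ‖C‖²`; the claim is the resulting scalar inequality.
-/

open Matrix

/-- Trace (Frobenius) inner product of matrices: `⟨M, N⟩ = trace(Mᵀ N)`. -/
def innerM {a b : ℕ} (M N : Matrix (Fin a) (Fin b) ℝ) : ℝ := ∑ i, ∑ j, M i j * N i j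

section Contraction

variable {l m n : Type*} [Fintype l] [Fintype m] [Fintype n]

def IsContraction (B : Matrix m n ℝ) : Prop :=
  ∀ x : n → ℝ, (B *ᵥ x) ⬝ᵥ (B *ᵥ x) ≤ x ⬝ᵥ x

lemma sq_dotProduct_le (x y : n → ℝ) : (x ⬝ᵥ y) ^ 2 ≤ (x ⬝ᵥ x) * (y ⬝ᵥ y) := by
  simpa only [dotProduct, sq] using Finset.sum_mul_sq_le_sq_mul_sq Finset.univ x y

lemma dotProduct_self_nonneg (x : n → ℝ) : 0 ≤ x ⬝ᵥ x :=
  Finset.sum_nonneg fun i _ => mul_self_nonneg (x i)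

lemma dotProduct_mulVec_transpose (B : Matrix m n ℝ) (x : m → ℝ) (y : n → ℝ) :
    x ⬝ᵥ (B *ᵥ y) = (Bᵀ *ᵥ x) ⬝ᵥ y := by
  rw [dotProduct_mulVec, mulVec_transpose]

lemma isContraction_of_transpose_mul_self_eq_one [DecidableEq n] {B : Matrix m n ℝ}
    (hB : Bᵀ * B = 1) : IsContraction B := fun x => by
  rw [dotProduct_comm, dotProduct_mulVec_transpose, mulVec_mulVec, hB, one_mulVec]

lemma IsContraction.mul {B : Matrix l m ℝ} {B' : Matrix m n ℝ} (hB : IsContraction B)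
    (hB' : IsContraction B') : IsContraction (B * B') := fun x => by
  rw [← mulVec_mulVec]
  exact (hB _).trans (hB' x)

lemma IsContraction.dotProduct_mulVec_le {B : Matrix n n ℝ} (hB : IsContraction B)
    (x : n → ℝ) : x ⬝ᵥ (B *ᵥ x) ≤ x ⬝ᵥ x := by
  nlinarith [hB x, sq_dotProduct_le x (B *ᵥ x), dotProduct_self_nonneg x]

lemma IsContraction.transpose {B : Matrix m n ℝ} (hB : IsContraction B) :
    IsContraction Bᵀ := fun x => by
  set y := Bᵀ *ᵥ x
  have hyy : y ⬝ᵥ y = x ⬝ᵥ (B *ᵥ y) := by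
    rw [dotProduct_mulVec_transpose, transpose_transpose, dotProduct_comm]
  have hCS := sq_dotProduct_le x (B *ᵥ y)
  rw [← hyy] at hCS
  nlinarith [hB y, dotProduct_self_nonneg x, dotProduct_self_nonneg y]

lemma isContraction_transpose_of_mul_transpose_add_mul_transpose_eq_one
    [DecidableEq m] {A : Matrix m n ℝ} {C : Matrix m l ℝ} (h : A * Aᵀ + C * Cᵀ = 1) :
    IsContraction Aᵀ := fun x => by
  have hx : x ⬝ᵥ x = (Aᵀ *ᵥ x) ⬝ᵥ (Aᵀ *ᵥ x) + (Cᵀ *ᵥ x) ⬝ᵥ (Cᵀ *ᵥ x) := by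
    rw [← dotProduct_mulVec_transpose, ← dotProduct_mulVec_transpose, ← dotProduct_add,
      mulVec_mulVec, mulVec_mulVec, ← add_mulVec, h, one_mulVec]
  rw [hx, le_add_iff_nonneg_right]
  exact dotProduct_self_nonneg _

lemma IsContraction.sum_sq_apply_le_one [DecidableEq n] {B : Matrix m n ℝ}
    (hB : IsContraction B) (j : n) : ∑ i, B i j ^ 2 ≤ 1 := by
  simpa [mulVec_single_one, dotProduct, sq, Pi.single_apply] using hB (Pi.single j 1)

section Orthogonal

variable [DecidableEq n]

noncomputable def householder (v : n → ℝ) : Matrix n n ℝ :=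
  1 - (2 / (v ⬝ᵥ v)) • vecMulVec v v

lemma householder_mulVec (v x : n → ℝ) :
    householder v *ᵥ x = x - (2 / (v ⬝ᵥ v) * (v ⬝ᵥ x)) • v := by
  rw [householder, sub_mulVec, one_mulVec, smul_mulVec, vecMulVec_mulVec, op_smul_eq_smul,
    smul_smul]

lemma transpose_householder (v : n → ℝ) : (householder v)ᵀ = householder v := by
  rw [householder, transpose_sub, transpose_one, transpose_smul, transpose_vecMulVec]

lemma householder_mul_self {v : n → ℝ} (hv : v ≠ 0) : householder v * householder v = 1 := by
  have hvv : v ⬝ᵥ v ≠ 0 := by rwa [Ne, dotProduct_self_eq_zero]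
  refine toLin'.injective (LinearMap.ext fun x => ?_)
  have hcoeff : 2 / (v ⬝ᵥ v) * (v ⬝ᵥ x) +
      2 / (v ⬝ᵥ v) * (v ⬝ᵥ x - 2 / (v ⬝ᵥ v) * (v ⬝ᵥ x) * (v ⬝ᵥ v)) = 0 := by
    field_simp
    ring
  simp only [toLin'_apply, ← mulVec_mulVec, householder_mulVec, one_mulVec, dotProduct_sub,
    dotProduct_smul, smul_eq_mul, sub_sub, ← add_smul, hcoeff, zero_smul, sub_zero]

lemma trace_householder_mul (v : n → ℝ) (S : Matrix n n ℝ) :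
    trace (householder v * S) = trace S - 2 / (v ⬝ᵥ v) * (v ⬝ᵥ (S *ᵥ v)) := by
  rw [householder, sub_mul, one_mul, smul_mul, vecMulVec_mul, trace_sub, trace_smul,
    trace_vecMulVec, dotProduct_mulVec, smul_eq_mul, dotProduct_comm (v ᵥ* S)]

lemma dotProduct_mulVec_nonneg_of_forall_orthogonal {S : Matrix n n ℝ}
    (hS : ∀ G : Matrix n n ℝ, Gᵀ * G = 1 → trace (G * S) ≤ trace S) (v : n → ℝ) :
    0 ≤ v ⬝ᵥ (S *ᵥ v) := by
  rcases eq_or_ne v 0 with rfl | hv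
  · simp
  have hvv : 0 < v ⬝ᵥ v :=
    (dotProduct_self_nonneg v).lt_of_ne' (by rwa [Ne, dotProduct_self_eq_zero])
  have h := hS (householder v) (by rw [transpose_householder, householder_mul_self hv])
  rw [trace_householder_mul, sub_le_self_iff] at h
  exact (mul_nonneg_iff_of_pos_left (by positivity)).mp h

lemma transpose_eq_of_forall_orthogonal {S : Matrix n n ℝ}
    (hS : ∀ G : Matrix n n ℝ, Gᵀ * G = 1 → trace (G * S) ≤ trace S) : Sᵀ = S := by
  ext i j
  rcases eq_or_ne i j with rfl | hij
  · rfl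
  -- The product of the reflections in `eᵢ` and `eᵢ + t eⱼ` is a rotation in the `(i, j)`-plane.
  have hquad : ∀ t : ℝ, 0 ≤ (S i i + S j j) * (t * t) + (S i j - S j i) * t + 0 := by
    intro t
    set u : n → ℝ := Pi.single i 1
    set w : n → ℝ := Pi.single i 1 + t • Pi.single j 1
    have hu : u ≠ 0 := by simp [u]
    have hw : w ≠ 0 := fun h => by simpa [w, hij] using congrFun h i
    have horth : (householder u * householder w)ᵀ * (householder u * householder w) = 1 := by
      rw [transpose_mul, transpose_householder, transpose_householder, Matrix.mul_assoc,
        ← Matrix.mul_assoc (householder u), householder_mul_self hu, Matrix.one_mul,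
        householder_mul_self hw]
    have h := hS _ horth
    rw [Matrix.mul_assoc, trace_householder_mul, trace_householder_mul, ← mulVec_mulVec,
      householder_mulVec] at h
    simp only [dotProduct_add, dotProduct_single, Pi.add_apply, Pi.single_eq_same, Pi.smul_apply,
      ne_eq, hij, not_false_eq_true, Pi.single_eq_of_ne, smul_eq_mul, mul_zero, add_zero, mul_one,
      dotProduct_smul, hij.symm, zero_add, mulVec_add, mulVec_single, MulOpposite.op_one, one_smul,
      mulVec_smul, add_dotProduct, single_dotProduct, col_apply, one_mul, smul_dotProduct, div_one,
      smul_add, dotProduct_sub, tsub_le_iff_right, w, u] at h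
    rw [add_assoc, le_add_iff_nonneg_right] at h
    have ht : 0 < 1 + t * t := by nlinarith [mul_self_nonneg t]
    refine (mul_nonneg (half_pos ht).le h).trans_eq ?_
    field_simp
    ring
  have hdisc := discrim_le_zero hquad
  rw [discrim, mul_zero, sub_zero] at hdisc
  have : S i j - S j i = 0 := pow_eq_zero_iff two_ne_zero |>.mp (le_antisymm hdisc (sq_nonneg _))
  rw [transpose_apply]
  linarith

lemma posSemidef_of_forall_orthogonal {S : Matrix n n ℝ}
    (hS : ∀ G : Matrix n n ℝ, Gᵀ * G = 1 → trace (G * S) ≤ trace S) : S.PosSemidef := by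
  refine .of_dotProduct_mulVec_nonneg ?_ fun x => ?_
  · rw [IsHermitian, conjTranspose_eq_transpose_of_trivial, transpose_eq_of_forall_orthogonal hS]
  · simpa using dotProduct_mulVec_nonneg_of_forall_orthogonal hS x

lemma exists_orthogonal_isMaxOn_trace_mul (M : Matrix n n ℝ) :
    ∃ D : Matrix n n ℝ, Dᵀ * D = 1 ∧
      ∀ G : Matrix n n ℝ, Gᵀ * G = 1 → trace (G * M) ≤ trace (D * M) := by
  have hclosed : IsClosed {D : Matrix n n ℝ | Dᵀ * D = 1} :=
    isClosed_eq (by fun_prop) continuous_const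
  have hbox : {D : Matrix n n ℝ | Dᵀ * D = 1} ⊆
      (Set.univ.pi fun _ => Set.univ.pi fun _ => Set.Icc (-1) 1 : Set (Matrix n n ℝ)) := by
    intro D hD i _ j _
    have hcol := (isContraction_of_transpose_mul_self_eq_one hD).sum_sq_apply_le_one j
    have hij : D i j ^ 2 ≤ 1 :=
      (Finset.single_le_sum (fun k _ => sq_nonneg (D k j)) (Finset.mem_univ i)).trans hcol
    exact abs_le.mp ((sq_le_one_iff_abs_le_one _).mp hij)
  have hcompact : IsCompact {D : Matrix n n ℝ | Dᵀ * D = 1} :=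
    (isCompact_univ_pi fun _ => isCompact_univ_pi fun _ => isCompact_Icc).of_isClosed_subset
      hclosed hbox
  obtain ⟨D, hD, hmax⟩ := hcompact.exists_isMaxOn ⟨1, show (1 : Matrix n n ℝ)ᵀ * 1 = 1 by simp⟩
    (by fun_prop : Continuous fun D : Matrix n n ℝ => trace (D * M)).continuousOn
  exact ⟨D, hD, fun G hG => hmax hG⟩

end Orthogonal

lemma Matrix.PosSemidef.trace_mul_le_of_isContraction {S B : Matrix n n ℝ} (hS : S.PosSemidef)
    (hB : IsContraction B) : trace (B * S) ≤ trace S := by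
  obtain ⟨k, v, rfl⟩ := posSemidef_iff_eq_sum_vecMulVec.mp hS
  simp only [star_trivial, Finset.mul_sum, trace_sum, mul_vecMulVec, trace_vecMulVec]
  exact Finset.sum_le_sum fun i _ => by
    rw [dotProduct_comm]
    exact hB.dotProduct_mulVec_le (v i)

lemma exists_orthogonal_forall_isContraction_trace_mul_le [DecidableEq n] (M : Matrix n n ℝ) :
    ∃ D : Matrix n n ℝ, Dᵀ * D = 1 ∧
      ∀ B : Matrix n n ℝ, IsContraction B → trace (B * M) ≤ trace (D * M) := by
  obtain ⟨D, hD, hmax⟩ := exists_orthogonal_isMaxOn_trace_mul M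
  have hDDt : D * Dᵀ = 1 := mul_eq_one_comm.mp hD
  have hpsd : (M * D).PosSemidef := by
    refine posSemidef_of_forall_orthogonal fun G hG => ?_
    have hDG : (D * G)ᵀ * (D * G) = 1 := by
      rw [transpose_mul, Matrix.mul_assoc, ← Matrix.mul_assoc Dᵀ, hD, Matrix.one_mul, hG]
    rw [← Matrix.mul_assoc, trace_mul_comm, ← Matrix.mul_assoc, trace_mul_comm M]
    exact hmax _ hDG
  refine ⟨D, hD, fun B hB => ?_⟩
  have hDtB : IsContraction (Dᵀ * B) :=
    (isContraction_of_transpose_mul_self_eq_one (by rw [transpose_transpose, hDDt])).mul hB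
  calc trace (B * M) = trace (Dᵀ * B * (M * D)) := by
        rw [trace_mul_comm (Dᵀ * B), Matrix.mul_assoc, ← Matrix.mul_assoc D, hDDt,
          Matrix.one_mul, trace_mul_comm]
    _ ≤ trace (M * D) := hpsd.trace_mul_le_of_isContraction hDtB
    _ = trace (D * M) := trace_mul_comm M D

end Contraction

section Frobenius

variable {a b c : ℕ}

lemma frobSq_eq_innerM_self (M : Matrix (Fin a) (Fin b) ℝ) : frobSq M = innerM M M := by
  simp only [frobSq, innerM, sq]

lemma innerM_eq_trace (M N : Matrix (Fin a) (Fin b) ℝ) : innerM M N = trace (Mᵀ * N) := by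
  simp only [innerM, trace, diag_apply, mul_apply, transpose_apply]
  exact Finset.sum_comm

lemma frobSq_eq_trace_mul_transpose (M : Matrix (Fin a) (Fin b) ℝ) :
    frobSq M = trace (M * Mᵀ) := by
  simp only [frobSq, trace, diag_apply, mul_apply, transpose_apply, sq]

lemma frobSq_add (M N : Matrix (Fin a) (Fin b) ℝ) :
    frobSq (M + N) = frobSq M + frobSq N + 2 * innerM M N := by
  simp only [frobSq, innerM, Matrix.add_apply, Finset.mul_sum, ← Finset.sum_add_distrib]
  exact Finset.sum_congr rfl fun i _ => Finset.sum_congr rfl fun j _ => by ring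

lemma frobSq_sub (M N : Matrix (Fin a) (Fin b) ℝ) :
    frobSq (M - N) = frobSq M + frobSq N - 2 * innerM M N := by
  simp only [frobSq, innerM, Matrix.sub_apply, Finset.mul_sum, ← Finset.sum_add_distrib,
    ← Finset.sum_sub_distrib]
  exact Finset.sum_congr rfl fun i _ => Finset.sum_congr rfl fun j _ => by ring

lemma frobSq_neg (M : Matrix (Fin a) (Fin b) ℝ) : frobSq (-M) = frobSq M := by
  simp only [frobSq, Matrix.neg_apply, neg_sq]

lemma frobSq_transpose_mul {D : Matrix (Fin a) (Fin a) ℝ} (hD : D * Dᵀ = 1)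
    (M : Matrix (Fin a) (Fin b) ℝ) : frobSq (Dᵀ * M) = frobSq M := by
  rw [frobSq_eq_innerM_self, frobSq_eq_innerM_self, innerM_eq_trace, innerM_eq_trace,
    transpose_mul, transpose_transpose, Matrix.mul_assoc, ← Matrix.mul_assoc D, hD,
    Matrix.one_mul]

lemma frobSq_mul_transpose {V : Matrix (Fin c) (Fin b) ℝ} (hV : Vᵀ * V = 1)
    (P : Matrix (Fin a) (Fin b) ℝ) : frobSq (P * Vᵀ) = frobSq P := by
  rw [frobSq_eq_trace_mul_transpose, frobSq_eq_trace_mul_transpose, transpose_mul,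
    transpose_transpose, Matrix.mul_assoc, ← Matrix.mul_assoc Vᵀ, hV, Matrix.one_mul]

lemma frobSq_mul_transpose_add_mul_transpose {b' : ℕ} {V : Matrix (Fin c) (Fin b) ℝ}
    {V' : Matrix (Fin c) (Fin b') ℝ} (hV : Vᵀ * V = 1) (hV' : V'ᵀ * V' = 1)
    (hVV' : Vᵀ * V' = 0) (P : Matrix (Fin a) (Fin b) ℝ) (Q : Matrix (Fin a) (Fin b') ℝ) :
    frobSq (P * Vᵀ + Q * V'ᵀ) = frobSq P + frobSq Q := by
  have hcross : innerM (P * Vᵀ) (Q * V'ᵀ) = 0 := by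
    have hV'V : V'ᵀ * V = 0 := by rw [← transpose_transpose (V'ᵀ * V), transpose_mul,
      transpose_transpose, hVV', transpose_zero]
    rw [innerM_eq_trace, transpose_mul, transpose_transpose, Matrix.mul_assoc, trace_mul_comm,
      Matrix.mul_assoc, Matrix.mul_assoc, hV'V, Matrix.mul_zero, Matrix.mul_zero, trace_zero]
  rw [frobSq_add, frobSq_mul_transpose hV, frobSq_mul_transpose hV', hcross, mul_zero, add_zero]

lemma frobSq_mul_le_of_mul_transpose_eq_diagonal {C : Matrix (Fin a) (Fin b) ℝ}
    {N : Matrix (Fin b) (Fin c) ℝ} {e : Fin b → ℝ} {β : ℝ} (hN : N * Nᵀ = diagonal e)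
    (he : ∀ k, e k ≤ β) : frobSq (C * N) ≤ β * frobSq C := by
  rw [frobSq_eq_trace_mul_transpose, transpose_mul, Matrix.mul_assoc, ← Matrix.mul_assoc N, hN,
    frobSq, Finset.mul_sum]
  refine Finset.sum_le_sum fun i _ => ?_
  rw [diag_apply, mul_apply]
  simp only [diagonal_mul, transpose_apply, Finset.mul_sum]
  exact Finset.sum_le_sum fun k _ => by nlinarith [he k, sq_nonneg (C i k)]

def rectDiagonal (e : Fin a → ℝ) : Matrix (Fin a) (Fin b) ℝ :=
  of fun i j => if (i : ℕ) = j then e i else 0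

lemma rectDiagonal_mul_transpose (e : Fin a → ℝ) :
    rectDiagonal (b := b) e * (rectDiagonal (b := b) e)ᵀ =
      diagonal fun k : Fin a => if (k : ℕ) < b then e k ^ 2 else 0 := by
  refine Matrix.ext fun k k' => ?_
  rw [mul_apply, diagonal_apply]
  simp only [rectDiagonal, transpose_apply, of_apply]
  rw [Fin.sum_univ_eq_sum_range
    (fun j => (if (k : ℕ) = j then e k else 0) * (if (k' : ℕ) = j then e k' else 0)) b]
  simp only [ite_mul, zero_mul, Finset.sum_ite_eq, Finset.mem_range]
  rcases eq_or_ne k k' with rfl | hkk'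
  · simp [sq]
  · simp [hkk', Fin.val_inj, hkk'.symm]

lemma frobSq_mul_rectDiagonal_le {C : Matrix (Fin a) (Fin b) ℝ} {e : Fin b → ℝ} {β : ℝ}
    (he0 : ∀ k, 0 ≤ e k) (he : ∀ k, e k ≤ β) :
    frobSq (C * rectDiagonal (b := c) e) ≤ β ^ 2 * frobSq C := by
  refine frobSq_mul_le_of_mul_transpose_eq_diagonal (rectDiagonal_mul_transpose e) fun k => ?_
  split_ifs
  · exact pow_le_pow_left₀ (he0 k) (he k) 2
  · exact sq_nonneg β

lemma frobSq_diagonal (d : Fin a → ℝ) : frobSq (diagonal d) = ∑ j, d j ^ 2 := by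
  simp [frobSq, diagonal_apply, sq]

lemma frobSq_mul_diagonal (A : Matrix (Fin a) (Fin b) ℝ) (d : Fin b → ℝ) :
    frobSq (A * diagonal d) = ∑ j, d j ^ 2 * ∑ i, A i j ^ 2 := by
  rw [frobSq, Finset.sum_comm]
  simp only [mul_diagonal, Finset.mul_sum, mul_pow, mul_comm]

lemma innerM_mul_diagonal (E A : Matrix (Fin a) (Fin b) ℝ) (d : Fin b → ℝ) :
    innerM (E * diagonal d) (A * diagonal d) = trace (Eᵀ * (A * (diagonal d * diagonal d))) := by
  rw [innerM_eq_trace, transpose_mul, diagonal_transpose, Matrix.mul_assoc, trace_mul_comm,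
    Matrix.mul_assoc, Matrix.mul_assoc]

lemma frobSq_add_frobSq_of_mul_transpose_add_mul_transpose_eq_one
    {A : Matrix (Fin a) (Fin b) ℝ} {C : Matrix (Fin a) (Fin c) ℝ} (h : A * Aᵀ + C * Cᵀ = 1) :
    frobSq A + frobSq C = a := by
  rw [frobSq_eq_trace_mul_transpose, frobSq_eq_trace_mul_transpose, ← trace_add, h, trace_one,
    Fintype.card_fin]

lemma sq_mul_frobSq_le_frobSq_diagonal_sub {A : Matrix (Fin a) (Fin a) ℝ}
    {C : Matrix (Fin a) (Fin b) ℝ} (h : A * Aᵀ + C * Cᵀ = 1) {d : Fin a → ℝ} {δ : ℝ}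
    (hδ : 0 ≤ δ) (hd : ∀ j, δ ≤ d j) :
    δ ^ 2 * frobSq C ≤ frobSq (diagonal d) - frobSq (A * diagonal d) := by
  have hcol := (isContraction_transpose_of_mul_transpose_add_mul_transpose_eq_one h).transpose
  rw [transpose_transpose] at hcol
  have hC : frobSq C = ∑ j, (1 - ∑ i, A i j ^ 2) := by
    have hAC := frobSq_add_frobSq_of_mul_transpose_add_mul_transpose_eq_one h
    rw [frobSq, Finset.sum_comm] at hAC
    simp only [Finset.sum_sub_distrib, Finset.sum_const, Finset.card_univ, Fintype.card_fin,
      nsmul_eq_mul, mul_one]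
    linarith
  rw [hC, frobSq_diagonal, frobSq_mul_diagonal, Finset.mul_sum, ← Finset.sum_sub_distrib]
  refine Finset.sum_le_sum fun j _ => ?_
  have hsq : δ ^ 2 ≤ d j ^ 2 := pow_le_pow_left₀ hδ (hd j) 2
  nlinarith [hcol.sum_sq_apply_le_one j]

end Frobenius

lemma one_sub_div_one_add_mul_le {b δ T P τ c ρ : ℝ} (hb : 0 ≤ b) (hbδ : b ≤ δ) (hPτ : P ≤ τ)
    (hc : c ≤ b ^ 2 * ρ) (hρ : δ ^ 2 * ρ ≤ T - P) :
    (1 - b ^ 2 / δ ^ 2) / (1 + b ^ 2 / δ ^ 2) * (T + P - 2 * τ + c) ≤ T - (P + c) := by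
  set β := b ^ 2 / δ ^ 2 with hβ
  have hβ0 : 0 ≤ β := by positivity
  have hβ1 : β ≤ 1 := div_le_one_of_le₀ (pow_le_pow_left₀ hb hbδ 2) (sq_nonneg δ)
  have hcβ : c ≤ β * (T - P) := by
    rcases (hb.trans hbδ).eq_or_lt with hδ | hδ
    · -- `δ = 0` forces `b = 0`, and then `b ^ 2 / δ ^ 2 = 0 / 0 = 0`.
      obtain rfl : b = 0 := le_antisymm (hbδ.trans_eq hδ.symm) hb
      simpa [β, ← hδ] using hc
    · calc c ≤ b ^ 2 * ρ := hc
        _ = β * (δ ^ 2 * ρ) := by rw [hβ]; field_simp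
        _ ≤ β * (T - P) := mul_le_mul_of_nonneg_left hρ hβ0
  rw [div_mul_eq_mul_div, div_le_iff₀ (by positivity)]
  nlinarith

/-- `Σ = diagonal d`, `Σ⊥ = rectDiagonal dp`, and `b` stands for `σ_{r+1}(Y)`: the largest entry
of `dp`, or `0` if `dp` is empty. -/
theorem stmt_5 {s t r s' t' : ℕ} (hr : 0 < r)
    (X U : Matrix (Fin s) (Fin r) ℝ) (hX : Xᵀ * X = 1) (hU : Uᵀ * U = 1)
    (V : Matrix (Fin t) (Fin r) ℝ) (hV : Vᵀ * V = 1)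
    (Up : Matrix (Fin s) (Fin s') ℝ)
    (Vp : Matrix (Fin t) (Fin t') ℝ) (hVp : Vpᵀ * Vp = 1)
    (hUUp : Uᵀ * Up = 0) (hVVp : Vᵀ * Vp = 0)
    (hUfull : U * Uᵀ + Up * Upᵀ = 1)
    (d : Fin r → ℝ) (hdmono : ∀ i j : Fin r, i ≤ j → d j ≤ d i)
    (dp : Fin s' → ℝ) (hdp0 : ∀ i, 0 ≤ dp i)
    (b : ℝ) (hb : ∀ i, dp i ≤ b) (hbmax : b = 0 ∨ ∃ i, b = dp i)
    (hgap : b ≤ d ⟨r - 1, by omega⟩)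
    (Y : Matrix (Fin s) (Fin t) ℝ)
    (hY : Y = U * Matrix.diagonal d * Vᵀ +
      Up * (Matrix.of fun (i : Fin s') (j : Fin t') =>
        if (i : ℕ) = (j : ℕ) then dp i else 0) * Vpᵀ) :
    ∃ D : Matrix (Fin r) (Fin r) ℝ, Dᵀ * D = 1 ∧
      (∀ D' : Matrix (Fin r) (Fin r) ℝ, D'ᵀ * D' = 1 →
        innerM D'ᵀ (Xᵀ * U * (Matrix.diagonal d * Matrix.diagonal d)) ≤
          innerM Dᵀ (Xᵀ * U * (Matrix.diagonal d * Matrix.diagonal d))) ∧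
      frobSq (Uᵀ * Y) - frobSq (Xᵀ * Y) ≥
        (1 - b ^ 2 / (d ⟨r - 1, by omega⟩) ^ 2) /
            (1 + b ^ 2 / (d ⟨r - 1, by omega⟩) ^ 2) *
          frobSq (Dᵀ * (Uᵀ * Y) - Xᵀ * Y) := by
  change Y = U * diagonal d * Vᵀ + Up * rectDiagonal dp * Vpᵀ at hY
  set S := diagonal d
  set A := Xᵀ * U
  set C := Xᵀ * Up
  set N : Matrix (Fin s') (Fin t') ℝ := rectDiagonal dp
  have hAC : A * Aᵀ + C * Cᵀ = 1 := by
    simp only [A, C, transpose_mul, transpose_transpose, Matrix.mul_assoc, ← Matrix.mul_add]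
    rw [← Matrix.mul_assoc U, ← Matrix.mul_assoc Up, ← Matrix.add_mul, hUfull, Matrix.one_mul, hX]
  obtain ⟨D, hD, hDmax⟩ := exists_orthogonal_forall_isContraction_trace_mul_le (A * (S * S))
  refine ⟨D, hD, fun D' hD' => ?_, ?_⟩
  · simpa only [innerM_eq_trace, transpose_transpose]
      using hDmax D' (isContraction_of_transpose_mul_self_eq_one hD')
  have hUY : Uᵀ * Y = S * Vᵀ := by
    rw [hY]
    simp only [Matrix.mul_add, ← Matrix.mul_assoc, hU, hUUp, Matrix.one_mul, Matrix.zero_mul,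
      add_zero]
  have hXY : Xᵀ * Y = A * S * Vᵀ + C * N * Vpᵀ := by
    rw [hY]; simp only [Matrix.mul_add, ← Matrix.mul_assoc, A, C, S, N]
  have hres : Dᵀ * (Uᵀ * Y) - Xᵀ * Y = (Dᵀ * S - A * S) * Vᵀ + (-(C * N)) * Vpᵀ := by
    rw [hUY, hXY, Matrix.sub_mul, Matrix.neg_mul, ← Matrix.mul_assoc Dᵀ]
    abel
  have hb0 : 0 ≤ b := hbmax.elim (fun h => h.ge) fun ⟨i, hi⟩ => hi ▸ hdp0 i
  rw [ge_iff_le, hres, hUY, hXY]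
  simp only [frobSq_mul_transpose_add_mul_transpose hV hVp hVVp, frobSq_mul_transpose hV,
    frobSq_sub, frobSq_neg, frobSq_transpose_mul (mul_eq_one_comm.mp hD)]
  refine one_sub_div_one_add_mul_le hb0 hgap ?_ (frobSq_mul_rectDiagonal_le hdp0 hb)
    (sq_mul_frobSq_le_frobSq_diagonal_sub hAC (hb0.trans hgap) fun j => hdmono _ _ ?_)
  · rw [frobSq_eq_innerM_self, innerM_mul_diagonal, innerM_mul_diagonal, transpose_transpose]
    exact hDmax _ (isContraction_transpose_of_mul_transpose_add_mul_transpose_eq_one hAC)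
  · exact Fin.mk_le_mk.mpr (by omega)
end

section
/- For matrices A and B, the Moore–Penrose pseudo-inverse of the Kronecker product satisfies (A ⊗ B)† = A† ⊗ B†. -/
open Matrix
open scoped Kronecker

/-- The four Penrose conditions characterizing the Moore–Penrose pseudo-inverse
of a real matrix. -/
def IsMoorePenroseInv {α β : Type*} [Fintype α] [Fintype β]
    (A : Matrix α β ℝ) (X : Matrix β α ℝ) : Prop :=
  A * X * A = A ∧ X * A * X = X ∧ (A * X)ᵀ = A * X ∧ (X * A)ᵀ = X * A

theorem mp_unique {α β : Type*} [Fintype α] [Fintype β]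
    {A : Matrix α β ℝ} {X Z : Matrix β α ℝ}
    (hX : IsMoorePenroseInv A X) (hZ : IsMoorePenroseInv A Z) : Z = X := by
  obtain ⟨hX1, hX2, hX3, hX4⟩ := hX
  obtain ⟨hZ1, hZ2, hZ3, hZ4⟩ := hZ
  have hXZ : X * A * Z = X := by
    calc X * A * Z = X * (A * Z) := by rw [Matrix.mul_assoc]
    _ = X * (A * Z)ᵀ := by rw [hZ3]
    _ = X * (A * X * A * Z)ᵀ := by rw [hX1]
    _ = X * ((A * X) * (A * Z))ᵀ := by simp only [Matrix.mul_assoc]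
    _ = X * ((A * Z)ᵀ * (A * X)ᵀ) := by rw [transpose_mul]
    _ = X * ((A * Z) * (A * X)) := by rw [hX3, hZ3]
    _ = (X * (A * Z) * A) * X := by simp only [Matrix.mul_assoc]
    _ = (X * A * Z * A) * X := by simp only [Matrix.mul_assoc]
    _ = X * (A * Z * A) * X := by simp only [Matrix.mul_assoc]
    _ = X * A * X := by rw [hZ1]
    _ = X := hX2
  have hXZ2 : X * A * Z = Z := by
    calc X * A * Z = (X * A) * Z := rfl
    _ = (X * A)ᵀ * Z := by rw [hX4]
    _ = (X * (A * Z * A))ᵀ * Z := by rw [hZ1]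
    _ = ((X * A) * (Z * A))ᵀ * Z := by simp only [Matrix.mul_assoc]
    _ = ((Z * A)ᵀ * (X * A)ᵀ) * Z := by rw [transpose_mul]
    _ = ((Z * A) * (X * A)) * Z := by rw [hX4, hZ4]
    _ = Z * (A * X * A) * Z := by simp only [Matrix.mul_assoc]
    _ = Z * A * Z := by rw [hX1]
    _ = Z := hZ2
  rw [← hXZ, hXZ2]

/-- `(A ⊗ B)† = A† ⊗ B†`: if `X` and `Y` are the Moore–Penrose pseudo-inverses of
`A` and `B`, then `X ⊗ Y` is the (unique) Moore–Penrose pseudo-inverse of `A ⊗ B`. -/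
theorem stmt_13 {m n p q : ℕ}
    (A : Matrix (Fin m) (Fin n) ℝ) (B : Matrix (Fin p) (Fin q) ℝ)
    (X : Matrix (Fin n) (Fin m) ℝ) (Y : Matrix (Fin q) (Fin p) ℝ)
    (hA : IsMoorePenroseInv A X) (hB : IsMoorePenroseInv B Y) :
    IsMoorePenroseInv (A ⊗ₖ B) (X ⊗ₖ Y) ∧
      ∀ Z, IsMoorePenroseInv (A ⊗ₖ B) Z → Z = X ⊗ₖ Y := by
  obtain ⟨hA1, hA2, hA3, hA4⟩ := hA
  obtain ⟨hB1, hB2, hB3, hB4⟩ := hB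
  have hmp : IsMoorePenroseInv (A ⊗ₖ B) (X ⊗ₖ Y) := by
    refine ⟨?_, ?_, ?_, ?_⟩
    · rw [← mul_kronecker_mul, ← mul_kronecker_mul, hA1, hB1]
    · rw [← mul_kronecker_mul, ← mul_kronecker_mul, hA2, hB2]
    · rw [← mul_kronecker_mul, ← kroneckerMap_transpose, hA3, hB3]
    · rw [← mul_kronecker_mul, ← kroneckerMap_transpose, hA4, hB4]
  exact ⟨hmp, fun Z hZ => mp_unique hmp hZ⟩
end
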